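/- The Laplace–Beltrami eigenvalue function d^β(κ) = Σ_{i=1}^m κ_i(βκ_i + m - i - β) is strictly monotone with respect to lexicographic order among partitions of the same size k when β > 0 in the following weak sense: if μ ≺ κ in dominance order and μ ≠ κ then d^β(μ) < d^β(κ). -/

import Mathlib

open Finset

/-- Abel summation by parts. -/
lemma abel_sum' (a w : ℕ → ℝ) (n : ℕ) :
    ∑ i ∈ range n, a i * w i
      = ∑ i ∈ range n, (∑ j ∈ range (i + 1), a j) * (w i - w (i + 1))
        + (∑ j ∈ range n, a j) * w n := by
  induction n with
  | zero => simp
  | succ n ih =>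
      rw [sum_range_succ, ih,
        sum_range_succ (fun i => (∑ j ∈ range (i + 1), a j) * (w i - w (i + 1))),
        sum_range_succ a]
      ring

/-- Converting a truncated range sum to a filtered `Fin` sum. -/
lemma sum_range_eq_filter' {m : ℕ} (f : Fin m → ℝ) (n : ℕ) (hn : n ≤ m) :
    ∑ j ∈ range n, (if h : j < m then f ⟨j, h⟩ else 0)
      = ∑ i ∈ univ.filter (fun i : Fin m => (i : ℕ) < n), f i := by
  induction n with
  | zero => simp
  | succ n ih =>
      have hnm : n < m := lt_of_lt_of_le (Nat.lt_succ_self n) hn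
      rw [sum_range_succ, ih (le_of_lt hnm), dif_pos hnm]
      have hins : univ.filter (fun i : Fin m => (i : ℕ) < n + 1)
          = insert (⟨n, hnm⟩ : Fin m) (univ.filter (fun i : Fin m => (i : ℕ) < n)) := by
        ext i
        simp only [mem_filter, mem_univ, true_and, mem_insert, Fin.ext_iff,
          Nat.lt_succ_iff_lt_or_eq]
        tauto
      rw [hins, sum_insert (by simp)]
      ring

/-- The Laplace–Beltrami eigenvalue `d^β(κ) = Σ_{i=1}^m κ_i(βκ_i + m - i - β)` is strictly
monotone with respect to dominance order among partitions of the same size `k` when `β > 0`: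
if `μ ⪯ κ` in dominance order and `μ ≠ κ` then `d^β(μ) < d^β(κ)`. -/
theorem stmt12 (m k : ℕ) (β : ℝ) (hβ : 0 < β) (κ μ : Fin m → ℕ)
    (hκ : ∀ i j : Fin m, i ≤ j → κ j ≤ κ i) (hμ : ∀ i j : Fin m, i ≤ j → μ j ≤ μ i)
    (hκk : ∑ i, κ i = k) (hμk : ∑ i, μ i = k)
    (hdom : ∀ j : Fin m, ∑ i ∈ Finset.univ.filter (· ≤ j), μ i ≤
      ∑ i ∈ Finset.univ.filter (· ≤ j), κ i)
    (hne : μ ≠ κ) :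
    ∑ i : Fin m, (μ i : ℝ) * (β * μ i + m - ((i : ℕ) + 1) - β) <
      ∑ i : Fin m, (κ i : ℝ) * (β * κ i + m - ((i : ℕ) + 1) - β) := by
  -- the difference sequence and the weights
  set a : ℕ → ℝ := fun t => if h : t < m then (κ ⟨t, h⟩ : ℝ) - (μ ⟨t, h⟩ : ℝ) else 0 with ha
  set w : ℕ → ℝ :=
    fun t => β * (if h : t < m then (κ ⟨t, h⟩ : ℝ) + (μ ⟨t, h⟩ : ℝ) else 0) - t with hw
  -- partial sums of `a` are nonnegative
  have hfilter_eq : ∀ n : ℕ, n ≤ m → ∀ f : Fin m → ℕ,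
      ∑ j ∈ range n, (if h : j < m then ((f ⟨j, h⟩ : ℝ)) else 0)
        = ((∑ i ∈ univ.filter (fun i : Fin m => (i : ℕ) < n), f i : ℕ) : ℝ) := by
    intro n hn f
    rw [sum_range_eq_filter' (fun i => (f i : ℝ)) n hn, Nat.cast_sum]
  have hSa : ∀ n : ℕ, n ≤ m →
      ∑ j ∈ range n, a j
        = ((∑ i ∈ univ.filter (fun i : Fin m => (i : ℕ) < n), κ i : ℕ) : ℝ)
          - ((∑ i ∈ univ.filter (fun i : Fin m => (i : ℕ) < n), μ i : ℕ) : ℝ) := by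
    intro n hn
    have : ∑ j ∈ range n, a j
        = ∑ j ∈ range n, ((if h : j < m then ((κ ⟨j, h⟩ : ℕ) : ℝ) else 0)
            - (if h : j < m then ((μ ⟨j, h⟩ : ℕ) : ℝ) else 0)) := by
      apply sum_congr rfl
      intro j hj
      simp only [ha]
      split <;> simp
    rw [this, sum_sub_distrib, hfilter_eq n hn κ, hfilter_eq n hn μ]
  have hS_nonneg : ∀ n : ℕ, n ≤ m → 0 ≤ ∑ j ∈ range n, a j := by
    intro n hn
    rw [hSa n hn]
    rcases Nat.eq_zero_or_pos n with h0 | hpos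
    · subst h0; simp
    · have hn1 : n - 1 < m := by omega
      have hset : univ.filter (fun i : Fin m => (i : ℕ) < n)
          = univ.filter (· ≤ (⟨n - 1, hn1⟩ : Fin m)) := by
        ext i
        simp only [mem_filter, mem_univ, true_and, Fin.le_def]
        omega
      rw [hset]
      have := hdom ⟨n - 1, hn1⟩
      have h2 : ((∑ i ∈ univ.filter (· ≤ (⟨n - 1, hn1⟩ : Fin m)), μ i : ℕ) : ℝ)
          ≤ ((∑ i ∈ univ.filter (· ≤ (⟨n - 1, hn1⟩ : Fin m)), κ i : ℕ) : ℝ) := by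
        exact_mod_cast this
      linarith
  -- full sum of `a` is zero
  have hfull : (univ.filter (fun i : Fin m => (i : ℕ) < m)) = (univ : Finset (Fin m)) := by
    ext i; simp [i.isLt]
  have hSm : ∑ j ∈ range m, a j = 0 := by
    rw [hSa m le_rfl, hfull, hκk, hμk]
    ring
  -- weight differences are positive below m
  have hwdiff : ∀ t : ℕ, t + 1 < m → 1 ≤ w t - w (t + 1) := by
    intro t ht
    have htm : t < m := Nat.lt_of_succ_lt ht
    have hle : (⟨t, htm⟩ : Fin m) ≤ ⟨t + 1, ht⟩ := by simp [Fin.le_def]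
    have h1 : κ ⟨t + 1, ht⟩ ≤ κ ⟨t, htm⟩ := hκ _ _ hle
    have h2 : μ ⟨t + 1, ht⟩ ≤ μ ⟨t, htm⟩ := hμ _ _ hle
    have h1' : (κ ⟨t + 1, ht⟩ : ℝ) ≤ (κ ⟨t, htm⟩ : ℝ) := by exact_mod_cast h1
    have h2' : (μ ⟨t + 1, ht⟩ : ℝ) ≤ (μ ⟨t, htm⟩ : ℝ) := by exact_mod_cast h2
    simp only [hw, dif_pos htm, dif_pos ht]
    push_cast
    nlinarith
  -- there is a first index where μ and κ differ
  have hex : ∃ t : ℕ, ∃ h : t < m, μ ⟨t, h⟩ ≠ κ ⟨t, h⟩ := by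
    by_contra hc
    push_neg at hc
    apply hne
    funext i
    exact hc i.val i.isLt
  classical
  let P : ℕ → Prop := fun t => ∃ h : t < m, μ ⟨t, h⟩ ≠ κ ⟨t, h⟩
  have hexP : ∃ t, P t := hex
  set i0 := Nat.find hexP with hi0
  obtain ⟨hi0m, hi0ne⟩ := Nat.find_spec hexP
  have hprev : ∀ t, t < i0 → a t = 0 := by
    intro t ht
    have htm : t < m := lt_trans ht hi0m
    have := Nat.find_min hexP ht
    simp only [P, not_exists] at this
    have heq : μ ⟨t, htm⟩ = κ ⟨t, htm⟩ := by
      by_contra hcc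
      exact this htm hcc
    simp [ha, dif_pos htm, heq]
  have hSi0 : ∑ j ∈ range i0, a j = 0 := by
    apply sum_eq_zero
    intro j hj
    exact hprev j (mem_range.mp hj)
  have hai0 : a i0 ≠ 0 := by
    simp only [ha, dif_pos hi0m]
    intro hc
    apply hi0ne
    have : (μ ⟨i0, hi0m⟩ : ℝ) = (κ ⟨i0, hi0m⟩ : ℝ) := by
      split_ifs at hc with hh
      · linarith
      · exact absurd hi0m hh
    exact_mod_cast this
  have hSi0' : ∑ j ∈ range (i0 + 1), a j = a i0 := by
    rw [sum_range_succ, hSi0, zero_add]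
  have hSi0pos : 0 < ∑ j ∈ range (i0 + 1), a j := by
    have h1 := hS_nonneg (i0 + 1) hi0m
    rcases lt_or_eq_of_le h1 with h | h
    · exact h
    · exact absurd (hSi0' ▸ h.symm) hai0
  have hi0m1 : i0 + 1 < m := by
    by_contra h
    have heq : i0 + 1 = m := by omega
    rw [heq, hSm] at hSi0pos
    exact absurd hSi0pos (lt_irrefl 0)
  -- positivity of the Abel sum
  have hterm_nonneg : ∀ i ∈ range m,
      0 ≤ (∑ j ∈ range (i + 1), a j) * (w i - w (i + 1)) := by
    intro i hi
    have him : i < m := mem_range.mp hi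
    rcases Nat.lt_or_ge (i + 1) m with h | h
    · exact mul_nonneg (hS_nonneg (i + 1) him) (by linarith [hwdiff i h])
    · have heq : i + 1 = m := by omega
      rw [heq, hSm, zero_mul]
  have hterm_pos : 0 < (∑ j ∈ range (i0 + 1), a j) * (w i0 - w (i0 + 1)) :=
    mul_pos hSi0pos (by linarith [hwdiff i0 hi0m1])
  have habel_pos : 0 < ∑ i ∈ range m, a i * w i := by
    rw [abel_sum' a w m, hSm, zero_mul, add_zero]
    exact sum_pos' hterm_nonneg ⟨i0, mem_range.mpr (Nat.lt_of_succ_lt hi0m1), hterm_pos⟩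
  -- relate the Abel sum to the goal
  have hsum_a : ∑ i : Fin m, ((κ i : ℝ) - μ i) = 0 := by
    rw [sum_sub_distrib]
    rw [← Nat.cast_sum, ← Nat.cast_sum, hκk, hμk]
    ring
  have hconv : ∑ i ∈ range m, a i * w i
      = ∑ i : Fin m, ((κ i : ℝ) - μ i) * (β * ((κ i : ℝ) + μ i) - i) := by
    rw [← Fin.sum_univ_eq_sum_range (fun t => a t * w t) m]
    apply sum_congr rfl
    intro i _
    simp [ha, hw, i.isLt]
  have key : ∑ i : Fin m, (κ i : ℝ) * (β * κ i + m - ((i : ℕ) + 1) - β)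
      - ∑ i : Fin m, (μ i : ℝ) * (β * μ i + m - ((i : ℕ) + 1) - β)
      = ∑ i ∈ range m, a i * w i + ((m : ℝ) - 1 - β) * ∑ i : Fin m, ((κ i : ℝ) - μ i) := by
    rw [hconv, ← sum_sub_distrib, mul_sum, ← sum_add_distrib]
    apply sum_congr rfl
    intro i _
    ring
  have : 0 < ∑ i : Fin m, (κ i : ℝ) * (β * κ i + m - ((i : ℕ) + 1) - β)
      - ∑ i : Fin m, (μ i : ℝ) * (β * μ i + m - ((i : ℕ) + 1) - β) := by
    rw [key, hsum_a, mul_zero, add_zero]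
    exact habel_pos
  linarith
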